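/- arXiv:2601.22320 — 7 statements merged into one kernel-verified Lean document; each statement's English description precedes it below -/
import Mathlib

section
/- For every integer k ≥ 2, ∑_{0 ≤ i < j ≤ k-1} (1/(j-i))·ln((k-j)/(k-i)) = − ∑_{t=1}^{k-1} (1/t)·ln(binomial(k, t)). -/
open Finset Nat

private lemma log_fact (n : ℕ) :
    ∑ i ∈ Finset.range n, Real.log ((i : ℝ) + 1) = Real.log (n ! : ℝ) := by
  induction n with
  | zero => simp
  | succ m ih =>
    rw [Finset.sum_range_succ, ih, Nat.factorial_succ]
    push_cast
    rw [Real.log_mul (by positivity) (by positivity)]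
    ring

private lemma log_range_sub (n : ℕ) :
    ∑ i ∈ Finset.range n, Real.log ((n : ℝ) - i) = Real.log (n ! : ℝ) := by
  rw [← Finset.sum_range_reflect, ← log_fact n]
  refine Finset.sum_congr rfl ?_
  intro i hi
  simp only [Finset.mem_range] at hi
  congr 1
  have h : n - 1 - i = n - (i + 1) := by omega
  have h2 : i + 1 ≤ n := hi
  rw [h, Nat.cast_sub h2]
  push_cast
  ring

theorem stmt_3 (k : ℕ) (hk : 2 ≤ k) :
    ∑ j ∈ Finset.range k, ∑ i ∈ Finset.range j,
        (1 / ((j : ℝ) - (i : ℝ))) * Real.log (((k : ℝ) - j) / ((k : ℝ) - i)) =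
      - ∑ t ∈ Finset.Icc 1 (k - 1), (1 / (t : ℝ)) * Real.log (Nat.choose k t) := by
  have key : ∑ j ∈ Finset.range k, ∑ i ∈ Finset.range j,
        (1 / ((j : ℝ) - (i : ℝ))) * Real.log (((k : ℝ) - j) / ((k : ℝ) - i)) =
      ∑ t ∈ Finset.Icc 1 (k - 1), ∑ i ∈ Finset.range (k - t),
        (1 / (t : ℝ)) * Real.log (((k : ℝ) - (i + t : ℕ)) / ((k : ℝ) - i)) := by
    rw [Finset.sum_sigma', Finset.sum_sigma']
    refine Finset.sum_nbij' (fun p => ⟨p.1 - p.2, p.2⟩) (fun p => ⟨p.2 + p.1, p.2⟩)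
      ?_ ?_ ?_ ?_ ?_
    · rintro ⟨j, i⟩ hp
      simp only [Finset.mem_sigma, Finset.mem_range, Finset.mem_Icc] at hp ⊢
      omega
    · rintro ⟨t, i⟩ hp
      simp only [Finset.mem_sigma, Finset.mem_range, Finset.mem_Icc] at hp ⊢
      omega
    · rintro ⟨j, i⟩ hp
      simp only [Finset.mem_sigma, Finset.mem_range] at hp
      ext <;> simp <;> omega
    · rintro ⟨t, i⟩ hp
      simp only [Finset.mem_sigma, Finset.mem_range, Finset.mem_Icc] at hp
      ext <;> simp <;> omega
    · rintro ⟨j, i⟩ hp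
      simp only [Finset.mem_sigma, Finset.mem_range] at hp
      have h1 : ((j - i : ℕ) : ℝ) = (j : ℝ) - i := by
        have : i ≤ j := le_of_lt hp.2
        push_cast [Nat.cast_sub this]; ring
      have h2 : i + (j - i) = j := by omega
      simp only [h2, h1]
  rw [key, ← Finset.sum_neg_distrib]
  refine Finset.sum_congr rfl ?_
  intro t ht
  simp only [Finset.mem_Icc] at ht
  obtain ⟨ht1, ht2⟩ := ht
  have htk : t ≤ k := by omega
  have htpos : (0 : ℝ) < t := by exact_mod_cast ht1
  -- split logs and telescope
  have hsplit : ∀ i ∈ Finset.range (k - t),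
      (1 / (t : ℝ)) * Real.log (((k : ℝ) - (i + t : ℕ)) / ((k : ℝ) - i)) =
      (1 / (t : ℝ)) * (Real.log ((k : ℝ) - (i + t : ℕ)) - Real.log ((k : ℝ) - i)) := by
    intro i hi
    simp only [Finset.mem_range] at hi
    have h1 : (0 : ℝ) < (k : ℝ) - (i + t : ℕ) := by
      have : i + t < k := by omega
      push_cast
      have : ((i : ℝ) + t) < k := by exact_mod_cast this
      linarith
    have h2 : (0 : ℝ) < (k : ℝ) - i := by
      have : i < k := by omega
      have : (i : ℝ) < k := by exact_mod_cast this
      linarith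
    rw [Real.log_div (ne_of_gt h1) (ne_of_gt h2)]
  rw [Finset.sum_congr rfl hsplit, ← Finset.mul_sum, Finset.sum_sub_distrib]
  -- first sum: ∑_{i < k-t} log(k - (i+t)) = log (k-t)!
  have hA : ∑ i ∈ Finset.range (k - t), Real.log ((k : ℝ) - (i + t : ℕ)) =
      Real.log ((k - t)! : ℝ) := by
    rw [← log_range_sub (k - t)]
    refine Finset.sum_congr rfl ?_
    intro i hi
    simp only [Finset.mem_range] at hi
    congr 1
    have hc : ((k - t : ℕ) : ℝ) = (k : ℝ) - t := by
      push_cast [Nat.cast_sub htk]; ring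
    push_cast [hc]
    ring
  -- second sum: ∑_{i < k-t} log(k - i) = log k! - log t!
  have hB : ∑ i ∈ Finset.range (k - t), Real.log ((k : ℝ) - i) =
      Real.log (k ! : ℝ) - Real.log (t ! : ℝ) := by
    have hfull : ∑ i ∈ Finset.range k, Real.log ((k : ℝ) - i) = Real.log (k ! : ℝ) :=
      log_range_sub k
    have hsplit2 : ∑ i ∈ Finset.range k, Real.log ((k : ℝ) - i) =
        ∑ i ∈ Finset.range (k - t), Real.log ((k : ℝ) - i) +
        ∑ i ∈ Finset.Ico (k - t) k, Real.log ((k : ℝ) - i) := by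
      rw [Finset.range_eq_Ico, ← Finset.sum_Ico_consecutive _ (Nat.zero_le _) (Nat.sub_le k t), Finset.range_eq_Ico]
    have htail : ∑ i ∈ Finset.Ico (k - t) k, Real.log ((k : ℝ) - i) = Real.log (t ! : ℝ) := by
      rw [Finset.sum_Ico_eq_sum_range, ← log_range_sub t]
      have hkt : k - (k - t) = t := by omega
      rw [hkt]
      refine Finset.sum_congr rfl ?_
      intro i hi
      simp only [Finset.mem_range] at hi
      congr 1
      have : (k - t : ℕ) + i ≤ k := by omega
      have hc : ((k - t + i : ℕ) : ℝ) = (k : ℝ) - t + i := by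
        have h' : ((k - t : ℕ) : ℝ) = (k : ℝ) - t := by push_cast [Nat.cast_sub htk]; ring
        push_cast [h']; ring
      push_cast [hc]
      ring
    linarith [hfull, hsplit2 ▸ hfull, htail]
  rw [hA, hB]
  -- log of choose
  have hchoose : Real.log ((Nat.choose k t : ℕ) : ℝ) =
      Real.log (k ! : ℝ) - Real.log (t ! : ℝ) - Real.log ((k - t)! : ℝ) := by
    have h := Nat.choose_mul_factorial_mul_factorial htk
    have hc : ((Nat.choose k t : ℕ) : ℝ) * (t ! : ℝ) * ((k - t)! : ℝ) = (k ! : ℝ) := by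
      exact_mod_cast congrArg (Nat.cast : ℕ → ℝ) h
    have hpos1 : (0 : ℝ) < (Nat.choose k t : ℝ) := by
      exact_mod_cast Nat.choose_pos htk
    have hpos2 : (0 : ℝ) < (t ! : ℝ) := by exact_mod_cast Nat.factorial_pos t
    have hpos3 : (0 : ℝ) < ((k - t)! : ℝ) := by exact_mod_cast Nat.factorial_pos (k - t)
    have := congrArg Real.log hc
    rw [Real.log_mul (by positivity) (ne_of_gt hpos3),
      Real.log_mul (ne_of_gt hpos1) (ne_of_gt hpos2)] at this
    linarith
  rw [hchoose]
  ring
end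

section
/- For every integer k ≥ 2, − ∑_{t=1}^{k-1} (1/t)·ln(binomial(k, t)) ≥ −(π²/6)·k. -/
open Finset Real

lemma lemA (n k : ℕ) : (n+1) * ∑ s ∈ range k, s^n ≤ k^(n+1) := by
  induction k with
  | zero => simp
  | succ k ih =>
    rw [Finset.sum_range_succ, Nat.mul_add]
    have key : k^(n+1) + (n+1)*k^n ≤ (k+1)^(n+1) := by
      rw [add_pow]
      calc k^(n+1) + (n+1)*k^n
          = ∑ j ∈ ({n+1, n} : Finset ℕ), k^j * 1^(n+1-j) * Nat.choose (n+1) j := by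
            rw [Finset.sum_pair (by omega)]
            simp [Nat.choose_succ_self_right, Nat.mul_comm]
        _ ≤ _ := by
            apply Finset.sum_le_sum_of_subset
            intro j hj
            simp only [Finset.mem_insert, Finset.mem_singleton] at hj
            simp only [Finset.mem_range]
            omega
    omega

lemma lemB (k t : ℕ) (ht : t ≤ k) :
    Nat.choose k t * (t^t * (k-t)^(k-t)) ≤ k^k := by
  have h : (t + (k-t))^k = ∑ j ∈ range (k+1), t^j * (k-t)^(k-j) * Nat.choose k j :=
    add_pow t (k-t) k
  rw [Nat.add_sub_cancel' ht] at h
  rw [h]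
  have := Finset.single_le_sum (f := fun j => t^j * (k-t)^(k-j) * Nat.choose k j)
    (fun i _ => Nat.zero_le _) (Finset.mem_range.2 (by omega) : t ∈ range (k+1))
  simpa [mul_comm] using this
lemma lemC (k t : ℕ) (ht1 : 1 ≤ t) (ht2 : t ≤ k - 1) (hk : 2 ≤ k) :
    Real.log (Nat.choose k t) ≤
      t * Real.log (k / t) + (k - t : ℕ) * Real.log (k / (k - t : ℕ)) := by
  have htk : t < k := by omega
  have hct : 0 < Nat.choose k t := Nat.choose_pos htk.le
  have ht0 : (0:ℝ) < t := by exact_mod_cast ht1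
  have hkt0 : (0:ℝ) < (k - t : ℕ) := by
    have : 1 ≤ k - t := by omega
    exact_mod_cast this
  have hk0 : (0:ℝ) < k := by positivity
  have hnat := lemB k t htk.le
  have hreal : (Nat.choose k t : ℝ) * ((t:ℝ)^t * ((k-t:ℕ):ℝ)^(k-t)) ≤ (k:ℝ)^k := by
    exact_mod_cast hnat
  have hpos : (0:ℝ) < (Nat.choose k t : ℝ) * ((t:ℝ)^t * ((k-t:ℕ):ℝ)^(k-t)) := by positivity
  have hlog := Real.log_le_log hpos hreal
  rw [Real.log_mul (by positivity) (by positivity), Real.log_mul (by positivity) (by positivity),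
    Real.log_pow, Real.log_pow, Real.log_pow] at hlog
  have hsplit : (k:ℝ) * Real.log k = t * Real.log k + (k - t : ℕ) * Real.log k := by
    have : ((k:ℝ)) = (t:ℝ) + ((k-t:ℕ):ℝ) := by
      have : t + (k - t) = k := by omega
      exact_mod_cast this.symm
    rw [this]; ring
  rw [Real.log_div (by positivity) (by positivity), Real.log_div (by positivity) (by positivity)]
  nlinarith [hlog, hsplit]
lemma lemD (k : ℕ) (hk : 2 ≤ k) :
    ∑ t ∈ Icc 1 (k-1), Real.log ((k:ℝ) / ((k - t : ℕ):ℝ)) / t ≤ Real.pi^2/6 := by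
  have hk0 : (0:ℝ) < k := by positivity
  -- each summand is a convergent series
  have hterm : ∀ t ∈ Icc 1 (k-1), HasSum
      (fun n : ℕ => ((t:ℝ)/k)^(n+1)/(n+1)/t) (Real.log ((k:ℝ) / ((k - t : ℕ):ℝ)) / t) := by
    intro t ht
    simp only [mem_Icc] at ht
    have ht0 : (0:ℝ) < t := by exact_mod_cast ht.1
    have hkt : 1 ≤ k - t := by omega
    have hkt0 : (0:ℝ) < ((k-t:ℕ):ℝ) := by exact_mod_cast hkt
    have hx : |(t:ℝ)/k| < 1 := by
      rw [abs_of_pos (by positivity), div_lt_one hk0]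
      exact_mod_cast (by omega : t < k)
    have h1 := hasSum_pow_div_log_of_abs_lt_one hx
    have heq : -Real.log (1 - (t:ℝ)/k) = Real.log ((k:ℝ) / ((k - t : ℕ):ℝ)) := by
      have h2 : (1 : ℝ) - (t:ℝ)/k = ((k-t:ℕ):ℝ)/k := by
        have : ((k-t:ℕ):ℝ) = (k:ℝ) - t := by
          have : k - t + t = k := by omega
          have := congrArg (Nat.cast : ℕ → ℝ) this
          push_cast at this; linarith
        rw [this]; field_simp
      rw [h2, Real.log_div (by positivity) (by positivity),
        Real.log_div (by positivity) (by positivity)]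
      ring
    rw [heq] at h1
    exact h1.div_const _
  have hsum := hasSum_sum hterm
  -- Basel
  have hbasel : HasSum (fun n : ℕ => (1:ℝ)/((n:ℝ)+1)^2) (Real.pi^2/6) := by
    have h := hasSum_zeta_two
    have h1 : HasSum (fun n : ℕ => (1:ℝ)/(n:ℝ)^2) (Real.pi^2/6 + ∑ i ∈ range 1, (1:ℝ)/(i:ℝ)^2) := by
      simpa using h
    have := (hasSum_nat_add_iff (f := fun n : ℕ => (1:ℝ)/(n:ℝ)^2) 1).2 h1
    simpa using this
  refine hasSum_le ?_ hsum hbasel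
  intro n
  -- termwise bound
  have hA : ((n:ℝ)+1) * ∑ t ∈ range k, (t:ℝ)^n ≤ (k:ℝ)^(n+1) := by
    have := lemA n k
    exact_mod_cast this
  calc ∑ t ∈ Icc 1 (k-1), ((t:ℝ)/k)^(n+1)/(n+1)/t
      = ∑ t ∈ Icc 1 (k-1), (t:ℝ)^n * (1/((k:ℝ)^(n+1)*((n:ℝ)+1))) := by
        apply Finset.sum_congr rfl
        intro t ht
        simp only [mem_Icc] at ht
        have ht0 : (0:ℝ) < t := by exact_mod_cast ht.1
        rw [div_pow]
        field_simp
        ring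
    _ = (∑ t ∈ Icc 1 (k-1), (t:ℝ)^n) * (1/((k:ℝ)^(n+1)*((n:ℝ)+1))) := by
        rw [Finset.sum_mul]
    _ ≤ ((k:ℝ)^(n+1)/((n:ℝ)+1)) * (1/((k:ℝ)^(n+1)*((n:ℝ)+1))) := by
        apply mul_le_mul_of_nonneg_right _ (by positivity)
        have hsub : ∑ t ∈ Icc 1 (k-1), (t:ℝ)^n ≤ ∑ t ∈ range k, (t:ℝ)^n := by
          apply Finset.sum_le_sum_of_subset_of_nonneg
          · intro t ht; simp only [mem_Icc] at ht; simp only [mem_range]; omega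
          · intro t _ _; positivity
        refine hsub.trans ?_
        rw [le_div_iff₀ (by positivity)]
        linarith [hA]
    _ = 1/((n:ℝ)+1)^2 := by field_simp
theorem stmt_4 (k : ℕ) (hk : 2 ≤ k) :
    - ∑ t ∈ Finset.Icc 1 (k - 1), (1 / (t : ℝ)) * Real.log (Nat.choose k t) ≥
      -(Real.pi ^ 2 / 6) * k := by
  have hk0 : (0:ℝ) < k := by positivity
  have key : ∑ t ∈ Finset.Icc 1 (k - 1), (1 / (t : ℝ)) * Real.log (Nat.choose k t)
      ≤ (Real.pi ^ 2 / 6) * k := by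
    have castsub : ∀ t ∈ Icc 1 (k-1), ((k - t : ℕ):ℝ) = (k:ℝ) - t := by
      intro t ht
      simp only [mem_Icc] at ht
      have h : k - t + t = k := by omega
      have := congrArg (Nat.cast : ℕ → ℝ) h
      push_cast at this; linarith
    have step1 : ∑ t ∈ Icc 1 (k - 1), (1 / (t : ℝ)) * Real.log (Nat.choose k t)
        ≤ ∑ t ∈ Icc 1 (k-1),
          (Real.log ((k:ℝ)/t) + ((k-t:ℕ):ℝ)/t * Real.log ((k:ℝ)/((k-t:ℕ):ℝ))) := by
      apply Finset.sum_le_sum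
      intro t ht
      simp only [mem_Icc] at ht
      have ht0 : (0:ℝ) < t := by exact_mod_cast ht.1
      have hC := lemC k t ht.1 ht.2 hk
      have : (1 / (t : ℝ)) * Real.log (Nat.choose k t)
          ≤ (1/(t:ℝ)) * (t * Real.log (k / t) + (k - t : ℕ) * Real.log (k / (k - t : ℕ))) :=
        mul_le_mul_of_nonneg_left hC (by positivity)
      refine this.trans_eq ?_
      field_simp
    have refl1 : ∑ t ∈ Icc 1 (k-1), Real.log ((k:ℝ)/t)
        = ∑ t ∈ Icc 1 (k-1), Real.log ((k:ℝ)/((k-t:ℕ):ℝ)) := by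
      apply Finset.sum_nbij' (fun t => k - t) (fun t => k - t)
      · intro a ha; simp only [mem_Icc] at ha ⊢; omega
      · intro a ha; simp only [mem_Icc] at ha ⊢; omega
      · intro a ha; simp only [mem_Icc] at ha; omega
      · intro a ha; simp only [mem_Icc] at ha; omega
      · intro a ha
        simp only [mem_Icc] at ha
        congr 2
        have h : k - (k - a) = a := by omega
        rw [h]
    have step2 : ∑ t ∈ Icc 1 (k-1),
          (Real.log ((k:ℝ)/t) + ((k-t:ℕ):ℝ)/t * Real.log ((k:ℝ)/((k-t:ℕ):ℝ)))
        = (k:ℝ) * ∑ t ∈ Icc 1 (k-1), Real.log ((k:ℝ) / ((k - t : ℕ):ℝ)) / t := by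
      rw [Finset.sum_add_distrib, refl1, ← Finset.sum_add_distrib, Finset.mul_sum]
      apply Finset.sum_congr rfl
      intro t ht
      have hc := castsub t ht
      simp only [mem_Icc] at ht
      have ht0 : (0:ℝ) < t := by exact_mod_cast ht.1
      rw [hc]
      field_simp
      ring
    calc ∑ t ∈ Icc 1 (k - 1), (1 / (t : ℝ)) * Real.log (Nat.choose k t)
        ≤ _ := step1
      _ = (k:ℝ) * ∑ t ∈ Icc 1 (k-1), Real.log ((k:ℝ) / ((k - t : ℕ):ℝ)) / t := step2
      _ ≤ (k:ℝ) * (Real.pi^2/6) := by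
          exact mul_le_mul_of_nonneg_left (lemD k hk) (le_of_lt hk0)
      _ = (Real.pi ^ 2 / 6) * k := by ring
  linarith
end

section
/- The function f(x) = (p/(x+1))^{1/(x-p)} is monotonically increasing on (p, ∞) for any real p > 0; equivalently, g(x) = (ln p − ln(x+1))/(x−p) is increasing for x > p. -/
open Real Set

theorem stmt_5 (p : ℝ) (hp : 0 < p) :
    StrictMonoOn (fun x : ℝ => (p / (x + 1)) ^ ((1 : ℝ) / (x - p))) (Set.Ioi p) ∧
    StrictMonoOn (fun x : ℝ => (Real.log p - Real.log (x + 1)) / (x - p)) (Set.Ioi p) := by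
  set g : ℝ → ℝ := fun x => (Real.log p - Real.log (x + 1)) / (x - p) with hgdef
  have key : ∀ x ∈ Set.Ioi p, HasDerivAt g
      ((Real.log (x + 1) - Real.log p - (x - p) / (x + 1)) / (x - p) ^ 2) x := by
    intro x hx
    have hx' : p < x := hx
    have hx1 : 0 < x + 1 := by linarith
    have hxp : x - p ≠ 0 := sub_ne_zero.2 (ne_of_gt hx')
    have h1 : HasDerivAt (fun x : ℝ => Real.log p - Real.log (x + 1)) (-(1 / (x + 1))) x := by
      have := ((hasDerivAt_id x).add_const 1).log (ne_of_gt hx1)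
      simpa using this.const_sub (Real.log p)
    have h2 : HasDerivAt (fun x : ℝ => x - p) 1 x := (hasDerivAt_id x).sub_const p
    have := h1.div h2 hxp
    refine this.congr_deriv ?_
    have hx1' : x + 1 ≠ 0 := ne_of_gt hx1
    field_simp
    ring
  have hderiv_pos : ∀ x ∈ Set.Ioi p,
      0 < (Real.log (x + 1) - Real.log p - (x - p) / (x + 1)) / (x - p) ^ 2 := by
    intro x hx
    have hx' : p < x := hx
    have hx1 : 0 < x + 1 := by linarith
    have hq : (0:ℝ) < p / (x + 1) := div_pos hp hx1
    have hne : p / (x + 1) ≠ 1 := by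
      intro h
      have : p = x + 1 := by field_simp at h; linarith
      linarith
    have hlog : Real.log (p / (x + 1)) < p / (x + 1) - 1 :=
      Real.log_lt_sub_one_of_pos hq hne
    rw [Real.log_div (ne_of_gt hp) (ne_of_gt hx1)] at hlog
    have hnum : 0 < Real.log (x + 1) - Real.log p - (x - p) / (x + 1) := by
      have h2 : p / (x + 1) - 1 = -((x + 1 - p) / (x + 1)) := by field_simp; ring
      have h3 : (x - p) / (x + 1) < (x + 1 - p) / (x + 1) := by
        gcongr
        linarith
      nlinarith [hlog]
    exact div_pos hnum (pow_pos (sub_pos.2 hx') 2)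
  have hg : StrictMonoOn g (Set.Ioi p) := by
    apply strictMonoOn_of_hasDerivWithinAt_pos (convex_Ioi p)
    · exact fun x hx => (key x hx).continuousAt.continuousWithinAt
    · intro x hx
      rw [interior_Ioi] at hx
      exact (key x hx).hasDerivWithinAt
    · intro x hx
      rw [interior_Ioi] at hx
      exact hderiv_pos x hx
  refine ⟨?_, hg⟩
  have heq : ∀ x ∈ Set.Ioi p, (p / (x + 1)) ^ ((1 : ℝ) / (x - p)) = Real.exp (g x) := by
    intro x hx
    have hx' : p < x := hx
    have hx1 : 0 < x + 1 := by linarith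
    have hq : (0:ℝ) < p / (x + 1) := div_pos hp hx1
    rw [Real.rpow_def_of_pos hq, Real.log_div (ne_of_gt hp) (ne_of_gt hx1)]
    congr 1
    field_simp [hgdef]
    rfl
  intro a ha b hb hab
  simp only
  rw [heq a ha, heq b hb]
  exact Real.exp_lt_exp.2 (hg ha hb hab)
end

section
/- Let r_j = |binomial(-1/2, j)| be the absolute value of the generalized binomial coefficient. Then for all j ≥ 1, 1/√(π(j+1)) ≤ r_j ≤ 1/√(πj). -/
/-- `r j = |binomial(-1/2, j)|`, the absolute value of the generalized binomial
coefficient `(-1/2)(-1/2-1)⋯(-1/2-j+1)/j!`. -/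
noncomputable def genBinomHalf (j : ℕ) : ℝ :=
  |(∏ i ∈ Finset.range j, ((-1 / 2 : ℝ) - i)) / (Nat.factorial j : ℝ)|

lemma genBinomHalf_zero : genBinomHalf 0 = 1 := by simp [genBinomHalf]

lemma genBinomHalf_succ (n : ℕ) :
    genBinomHalf (n + 1) = genBinomHalf n * ((2 * n + 1) / (2 * n + 2)) := by
  unfold genBinomHalf
  have hfac : ((n.factorial : ℝ)) > 0 := by positivity
  have h1 : |(-1 / 2 : ℝ) - n| = (2 * n + 1) / 2 := by
    rw [abs_of_nonpos (by nlinarith [Nat.cast_nonneg (α := ℝ) n])]; ring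
  rw [Finset.prod_range_succ, Nat.factorial_succ, abs_div, abs_div, abs_mul, h1]
  push_cast
  rw [abs_of_pos hfac, abs_of_pos (by positivity : (0:ℝ) < (n+1) * n.factorial)]
  field_simp

lemma genBinomHalf_nonneg (n : ℕ) : 0 ≤ genBinomHalf n := abs_nonneg _

lemma wallis_identity (n : ℕ) :
    Real.Wallis.W n * ((2 * n + 1) * genBinomHalf n ^ 2) = 1 := by
  induction n with
  | zero => simp [genBinomHalf_zero, Real.Wallis.W]
  | succ n ih =>
    rw [Real.Wallis.W_succ, genBinomHalf_succ]
    have h1 : (2 * (n:ℝ) + 1) ≠ 0 := by positivity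
    have h2 : (2 * (n:ℝ) + 2) ≠ 0 := by positivity
    have h3 : (2 * (n:ℝ) + 3) ≠ 0 := by positivity
    push_cast
    field_simp at ih ⊢
    linear_combination (2*(n:ℝ)+3) * ih

theorem stmt_9 (j : ℕ) (hj : 1 ≤ j) :
    1 / Real.sqrt (Real.pi * ((j : ℝ) + 1)) ≤ genBinomHalf j ∧
      genBinomHalf j ≤ 1 / Real.sqrt (Real.pi * (j : ℝ)) := by
  have hjR : (1:ℝ) ≤ (j:ℝ) := by exact_mod_cast hj
  have hπ := Real.pi_pos
  have hW := wallis_identity j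
  have hWpos := Real.Wallis.W_pos j
  have hWle := Real.Wallis.W_le j
  have hleW := Real.Wallis.le_W j
  have hg := genBinomHalf_nonneg j
  have h21 : (0:ℝ) < 2 * j + 1 := by positivity
  have hsq : genBinomHalf j ^ 2 = 1 / ((2 * j + 1) * Real.Wallis.W j) := by
    field_simp
    linarith [hW]
  constructor
  · -- lower bound
    have h1 : 1 / (Real.pi * ((j:ℝ) + 1)) ≤ genBinomHalf j ^ 2 := by
      rw [hsq]
      apply div_le_div_of_nonneg_left one_pos.le (by positivity)
      nlinarith
    calc 1 / Real.sqrt (Real.pi * ((j:ℝ) + 1))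
        = Real.sqrt (1 / (Real.pi * ((j:ℝ) + 1))) := by
          rw [one_div, one_div, ← Real.sqrt_inv]
      _ ≤ Real.sqrt (genBinomHalf j ^ 2) := Real.sqrt_le_sqrt h1
      _ = genBinomHalf j := by rw [Real.sqrt_sq hg]
  · -- upper bound
    have h1 : genBinomHalf j ^ 2 ≤ 1 / (Real.pi * (j:ℝ)) := by
      rw [hsq]
      apply div_le_div_of_nonneg_left one_pos.le (by positivity)
      have : (2 * (j:ℝ) + 1) / (2 * j + 2) * (Real.pi / 2) ≤ Real.Wallis.W j := hleW
      have h2 : (0:ℝ) < 2 * (j:ℝ) + 2 := by positivity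
      rw [div_mul_eq_mul_div, div_le_iff₀ h2] at this
      nlinarith [mul_le_mul_of_nonneg_left this h21.le, hπ, hjR]
    calc genBinomHalf j = Real.sqrt (genBinomHalf j ^ 2) := (Real.sqrt_sq hg).symm
      _ ≤ Real.sqrt (1 / (Real.pi * (j:ℝ))) := Real.sqrt_le_sqrt h1
      _ = 1 / Real.sqrt (Real.pi * (j:ℝ)) := by
          rw [one_div, Real.sqrt_inv, one_div]
end

section
/- ∑_{t=1}^∞ H_t/t² = 2ζ(3), where H_t is the t-th harmonic number and ζ is the Riemann zeta function. -/
open Filter Finset Topology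
set_option maxHeartbeats 1000000

private lemma harm_cast (n : ℕ) : (harmonic n : ℝ) = ∑ i ∈ Finset.range n, 1/((i:ℝ)+1) := by
  rw [harmonic]; push_cast; simp [one_div]

private lemma g_tendsto (i : ℕ) :
    Tendsto (fun N : ℕ => 1/((N:ℝ)+(i:ℝ)+1)) atTop (𝓝 0) := by
  apply squeeze_zero (g := fun N : ℕ => 1/((N:ℝ)+1)) (fun N => by positivity)
  · intro N
    apply one_div_le_one_div_of_le (by positivity)
    have : (0:ℝ) ≤ (i:ℝ) := Nat.cast_nonneg i
    linarith
  · exact tendsto_one_div_add_atTop_nhds_zero_nat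

private lemma telescope (m : ℕ) :
    HasSum (fun n : ℕ => 1/((n:ℝ)+1) - 1/((n:ℝ)+(m:ℝ)+2)) ((harmonic (m+1) : ℝ)) := by
  set g : ℕ → ℝ := fun n => 1/((n:ℝ)+1) with hg
  have hnonneg : ∀ n : ℕ, 0 ≤ 1/((n:ℝ)+1) - 1/((n:ℝ)+(m:ℝ)+2) := by
    intro n
    have h2 : ((n:ℝ)+1) ≤ (n:ℝ)+(m:ℝ)+2 := by
      have : (0:ℝ) ≤ (m:ℝ) := Nat.cast_nonneg m
      linarith
    have := one_div_le_one_div_of_le (by positivity : (0:ℝ) < (n:ℝ)+1) h2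
    linarith
  rw [hasSum_iff_tendsto_nat_of_nonneg hnonneg]
  have key : ∀ N : ℕ, (∑ n ∈ range N, (1/((n:ℝ)+1) - 1/((n:ℝ)+(m:ℝ)+2)))
      = (harmonic (m+1) : ℝ) - ∑ i ∈ range (m+1), g (N+i) := by
    intro N
    have e1 : ∀ n : ℕ, 1/((n:ℝ)+(m:ℝ)+2) = g (n + (m+1)) := by
      intro n; simp only [hg]; push_cast; ring_nf
    have e2 : ∑ n ∈ range ((m+1)+N), g n = ∑ n ∈ range (m+1), g n + ∑ n ∈ range N, g ((m+1)+n) :=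
      Finset.sum_range_add g (m+1) N
    have e3 : ∑ n ∈ range (N+(m+1)), g n = ∑ n ∈ range N, g n + ∑ i ∈ range (m+1), g (N+i) :=
      Finset.sum_range_add g N (m+1)
    have e4 : (m+1)+N = N+(m+1) := by ring
    rw [Finset.sum_sub_distrib]
    simp only [e1]
    have e5 : ∑ n ∈ range N, g (n + (m+1)) = ∑ n ∈ range N, g ((m+1)+n) := by
      apply Finset.sum_congr rfl; intro n _; rw [add_comm]
    rw [e5, harm_cast]
    have : ∑ n ∈ range N, g ((m+1)+n)
        = ∑ n ∈ range N, g n + ∑ i ∈ range (m+1), g (N+i) - ∑ n ∈ range (m+1), g n := by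
      rw [← e3, ← e4, e2]; ring
    rw [this]
    simp only [hg]
    ring
  simp only [key]
  have h0 : Tendsto (fun N : ℕ => ∑ i ∈ range (m+1), g (N+i)) atTop (𝓝 0) := by
    have := tendsto_finset_sum (range (m+1))
      (fun i _ => (g_tendsto i : Tendsto (fun N : ℕ => 1/((N:ℝ)+(i:ℝ)+1)) atTop (𝓝 0)))
    simp only [Finset.sum_const_zero] at this
    apply this.congr
    intro N
    apply Finset.sum_congr rfl
    intro i _
    simp only [hg]; push_cast; ring_nf
  simpa using (tendsto_const_nhds (x := (harmonic (m+1) : ℝ))).sub h0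

noncomputable def Fd : ℕ × ℕ → ℝ :=
  fun p => 1/(((p.1:ℝ)+1)*((p.2:ℝ)+1)*((p.1:ℝ)+(p.2:ℝ)+2))

lemma Fd_nonneg : ∀ p, 0 ≤ Fd p := by
  intro p; unfold Fd; positivity

lemma row_hasSum (m : ℕ) :
    HasSum (fun n : ℕ => Fd (m, n)) ((harmonic (m+1) : ℝ) / ((m:ℝ)+1)^2) := by
  have h := (telescope m).div_const (((m:ℝ)+1)^2)
  have e : (fun n : ℕ => (1/((n:ℝ)+1) - 1/((n:ℝ)+(m:ℝ)+2)) / ((m:ℝ)+1)^2)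
      = fun n : ℕ => Fd (m, n) := by
    funext n
    unfold Fd
    have h1 : ((n:ℝ)+1) ≠ 0 := by positivity
    have h2 : ((n:ℝ)+(m:ℝ)+2) ≠ 0 := by positivity
    have h3 : ((m:ℝ)+1) ≠ 0 := by positivity
    field_simp
    ring
  rwa [e] at h

lemma pser32 : Summable (fun n : ℕ => 1/((n:ℝ)+1) ^ ((3:ℝ)/2)) := by
  have h := Real.summable_one_div_nat_rpow.2 (by norm_num : (1:ℝ) < 3/2)
  have := (summable_nat_add_iff 1).2 h
  apply this.congr
  intro n
  push_cast
  ring_nf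

lemma Fd_le (p : ℕ × ℕ) :
    Fd p ≤ 1/((p.1:ℝ)+1) ^ ((3:ℝ)/2) * (1/((p.2:ℝ)+1) ^ ((3:ℝ)/2)) := by
  obtain ⟨m, n⟩ := p
  set a : ℝ := (m:ℝ)+1 with ha
  set b : ℝ := (n:ℝ)+1 with hb
  have ha1 : (1:ℝ) ≤ a := by rw [ha]; have := Nat.cast_nonneg (α := ℝ) m; linarith
  have hb1 : (1:ℝ) ≤ b := by rw [hb]; have := Nat.cast_nonneg (α := ℝ) n; linarith
  have ha0 : (0:ℝ) < a := by linarith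
  have hb0 : (0:ℝ) < b := by linarith
  have hab : (0:ℝ) ≤ a*b := by positivity
  have key : a ^ ((3:ℝ)/2) * b ^ ((3:ℝ)/2) ≤ a*b*((m:ℝ)+(n:ℝ)+2) := by
    have e1 : a ^ ((3:ℝ)/2) * b ^ ((3:ℝ)/2) = (a*b) ^ ((3:ℝ)/2) :=
      (Real.mul_rpow ha0.le hb0.le).symm
    have e2 : (a*b) ^ ((3:ℝ)/2) = (a*b) * Real.sqrt (a*b) := by
      rw [show (3:ℝ)/2 = 1 + 1/2 by norm_num, Real.rpow_add (by positivity),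
        Real.rpow_one, ← Real.sqrt_eq_rpow]
    have e3 : Real.sqrt (a*b) ≤ a + b := by
      have : a*b ≤ (a+b)^2 := by nlinarith
      calc Real.sqrt (a*b) ≤ Real.sqrt ((a+b)^2) := Real.sqrt_le_sqrt this
        _ = a + b := Real.sqrt_sq (by linarith)
    have e4 : a + b = (m:ℝ)+(n:ℝ)+2 := by rw [ha, hb]; ring
    calc a ^ ((3:ℝ)/2) * b ^ ((3:ℝ)/2) = (a*b) * Real.sqrt (a*b) := by rw [e1, e2]
      _ ≤ (a*b) * (a+b) := by nlinarith [Real.sqrt_nonneg (a*b)]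
      _ = a*b*((m:ℝ)+(n:ℝ)+2) := by rw [e4]
  have h1 : (0:ℝ) < a ^ ((3:ℝ)/2) * b ^ ((3:ℝ)/2) := by positivity
  have h2 := one_div_le_one_div_of_le h1 key
  show 1/(a*b*((m:ℝ)+(n:ℝ)+2)) ≤ 1/a^((3:ℝ)/2) * (1/b^((3:ℝ)/2))
  rw [div_mul_div_comm, one_mul]
  exact h2

lemma Fd_summable : Summable Fd := by
  have hf' : 0 ≤ (fun n : ℕ => 1/((n:ℝ)+1) ^ ((3:ℝ)/2)) := by
    intro n; positivity
  have hb : Summable (fun p : ℕ × ℕ =>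
      1/((p.1:ℝ)+1) ^ ((3:ℝ)/2) * (1/((p.2:ℝ)+1) ^ ((3:ℝ)/2))) :=
    pser32.mul_of_nonneg pser32 hf' hf'
  exact Summable.of_nonneg_of_le Fd_nonneg Fd_le hb


noncomputable def Gd : ℕ × ℕ → ℝ :=
  fun p => 1/(((p.1:ℝ)+1)*((p.1:ℝ)+(p.2:ℝ)+2)^2)

lemma Gd_nonneg : ∀ p, 0 ≤ Gd p := by intro p; unfold Gd; positivity

lemma Gd_le_Fd : ∀ p, Gd p ≤ Fd p := by
  intro ⟨m, n⟩
  unfold Gd Fd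
  dsimp only
  apply one_div_le_one_div_of_le (by positivity)
  have hm : (0:ℝ) ≤ (m:ℝ) := Nat.cast_nonneg m
  have hn : (0:ℝ) ≤ (n:ℝ) := Nat.cast_nonneg n
  have hbs : (n:ℝ)+1 ≤ (m:ℝ)+(n:ℝ)+2 := by linarith
  nlinarith [mul_le_mul_of_nonneg_left hbs
    (by positivity : (0:ℝ) ≤ ((m:ℝ)+1)*((m:ℝ)+(n:ℝ)+2))]

lemma Gd_summable : Summable Gd :=
  Summable.of_nonneg_of_le Gd_nonneg Gd_le_Fd Fd_summable

lemma Fd_split (p : ℕ × ℕ) : Fd p = Gd p + Gd p.swap := by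
  obtain ⟨m, n⟩ := p
  unfold Fd Gd
  simp only [Prod.swap_prod_mk]
  have h1 : ((m:ℝ)+1) ≠ 0 := by positivity
  have h2 : ((n:ℝ)+1) ≠ 0 := by positivity
  have h3 : ((m:ℝ)+(n:ℝ)+2) ≠ 0 := by positivity
  have h4 : ((n:ℝ)+(m:ℝ)+2) ≠ 0 := by positivity
  field_simp
  ring

lemma tsumF_eq_two_tsumG : ∑' p, Fd p = 2 * ∑' p, Gd p := by
  have hswap : Summable (fun p : ℕ × ℕ => Gd p.swap) :=
    (Equiv.prodComm ℕ ℕ).summable_iff.2 Gd_summable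
  have h1 : ∑' p, Fd p = ∑' p, Gd p + ∑' p : ℕ × ℕ, Gd p.swap := by
    rw [tsum_congr Fd_split]
    exact Summable.tsum_add Gd_summable hswap
  have h2 := (Equiv.prodComm ℕ ℕ).tsum_eq Gd
  rw [Equiv.coe_prodComm] at h2
  rw [h1, h2]
  ring

noncomputable def Kd : ℕ × ℕ → ℝ :=
  fun q => if q.2 ≤ q.1 then 1/(((q.2:ℝ)+1)*((q.1:ℝ)+2)^2) else 0

lemma Kd_inj : Function.Injective (fun p : ℕ × ℕ => (p.1 + p.2, p.1)) := by
  rintro ⟨m, n⟩ ⟨m', n'⟩ h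
  simp only [Prod.mk.injEq] at h ⊢
  omega

lemma Kd_comp (p : ℕ × ℕ) : Kd (p.1 + p.2, p.1) = Gd p := by
  obtain ⟨m, n⟩ := p
  unfold Kd Gd
  simp only [if_pos (Nat.le_add_right m n)]
  push_cast
  ring_nf

lemma Kd_supp : Function.support Kd ⊆ Set.range (fun p : ℕ × ℕ => (p.1 + p.2, p.1)) := by
  intro ⟨t, m⟩ h
  simp only [Function.mem_support, Kd] at h
  by_cases hmt : m ≤ t
  · exact ⟨(m, t - m), by simp [Nat.add_sub_cancel' hmt]⟩
  · simp [hmt] at h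

lemma tsumG_eq_tsumK : ∑' p, Gd p = ∑' q, Kd q := by
  rw [← Kd_inj.tsum_eq Kd_supp]
  exact tsum_congr fun p => (Kd_comp p).symm

lemma Kd_summable : Summable Kd := by
  rw [← Function.Injective.summable_iff Kd_inj (by
    intro x hx
    by_contra h
    exact hx (Kd_supp h))]
  exact Gd_summable.congr (fun p => (Kd_comp p).symm)

lemma Kd_row (t : ℕ) : ∑' m, Kd (t, m) = (harmonic (t+1) : ℝ) / ((t:ℝ)+2)^2 := by
  rw [tsum_eq_sum (s := Finset.range (t+1)) (by
    intro m hm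
    simp only [Finset.mem_range] at hm
    unfold Kd
    simp only
    rw [if_neg (by omega)])]
  have : ∀ m ∈ Finset.range (t+1), Kd (t, m) = (1/((m:ℝ)+1)) * (1/((t:ℝ)+2)^2) := by
    intro m hm
    simp only [Finset.mem_range] at hm
    unfold Kd
    simp only
    rw [if_pos (by omega)]
    rw [div_mul_div_comm, one_mul]
  rw [Finset.sum_congr rfl this, ← Finset.sum_mul, ← harm_cast, mul_one_div]

lemma tsumK : ∑' q, Kd q = ∑' t, (harmonic (t+1) : ℝ) / ((t:ℝ)+2)^2 := by
  rw [Summable.tsum_prod' Kd_summable (fun t => summable_of_ne_finset_zero (s := Finset.range (t+1)) (by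
    intro m hm
    simp only [Finset.mem_range] at hm
    unfold Kd
    simp only
    rw [if_neg (by omega)]))]
  exact tsum_congr Kd_row


lemma hS_summable : Summable (fun t : ℕ => (harmonic (t+1) : ℝ) / ((t:ℝ)+1)^2) := by
  have h := ((summable_prod_of_nonneg Fd_nonneg).1 Fd_summable).2
  apply h.congr
  intro m
  exact (row_hasSum m).tsum_eq

lemma tsumF_eq_S : ∑' p, Fd p = ∑' t : ℕ, (harmonic (t+1) : ℝ) / ((t:ℝ)+1)^2 := by
  rw [Summable.tsum_prod' Fd_summable (fun m => (row_hasSum m).summable)]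
  exact tsum_congr fun m => (row_hasSum m).tsum_eq

lemma hZ_summable : Summable (fun n : ℕ => (1:ℝ)/((n:ℝ)+1)^3) := by
  have h : Summable (fun n : ℕ => (1:ℝ)/(n:ℝ)^3) := by
    rw [Real.summable_one_div_nat_pow]; norm_num
  have := (summable_nat_add_iff 1).2 h
  apply this.congr
  intro n
  push_cast
  ring_nf

lemma hS1_summable : Summable (fun t : ℕ => (harmonic (t+2) : ℝ) / ((t:ℝ)+2)^2) := by
  have := (summable_nat_add_iff 1).2 hS_summable
  apply this.congr
  intro t
  push_cast
  ring_nf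

lemma hZ2_summable : Summable (fun t : ℕ => (1:ℝ)/((t:ℝ)+2)^3) := by
  have := (summable_nat_add_iff 1).2 hZ_summable
  apply this.congr
  intro t
  push_cast
  ring_nf

lemma eqS : ∑' t : ℕ, (harmonic (t+1) : ℝ) / ((t:ℝ)+1)^2
    = 1 + ∑' t : ℕ, (harmonic (t+2) : ℝ) / ((t:ℝ)+2)^2 := by
  rw [Summable.tsum_eq_zero_add hS_summable]
  congr 1
  · norm_num [harmonic_succ, harmonic_zero]
  · apply tsum_congr
    intro t
    push_cast
    ring_nf

lemma eqZ : ∑' n : ℕ, (1:ℝ)/((n:ℝ)+1)^3 = 1 + ∑' t : ℕ, (1:ℝ)/((t:ℝ)+2)^3 := by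
  rw [Summable.tsum_eq_zero_add hZ_summable]
  congr 1
  · norm_num
  · apply tsum_congr
    intro t
    push_cast
    ring_nf

lemma eqK : ∑' t : ℕ, (harmonic (t+1) : ℝ) / ((t:ℝ)+2)^2
    = ∑' t : ℕ, (harmonic (t+2) : ℝ) / ((t:ℝ)+2)^2 - ∑' t : ℕ, (1:ℝ)/((t:ℝ)+2)^3 := by
  rw [← Summable.tsum_sub hS1_summable hZ2_summable]
  apply tsum_congr
  intro t
  have hc : (harmonic (t+1) : ℝ) = (harmonic (t+2) : ℝ) - 1/((t:ℝ)+2) := by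
    have := harmonic_succ (t+1)
    have h2 : (harmonic (t+2) : ℝ) = (harmonic (t+1) : ℝ) + 1/((t:ℝ)+2) := by
      rw [this]
      push_cast
      ring_nf
    linarith
  rw [hc]
  have h3 : ((t:ℝ)+2) ≠ 0 := by positivity
  field_simp

theorem stmt_13 :
    ∑' t : ℕ, (harmonic (t + 1) : ℝ) / ((t : ℝ) + 1) ^ 2 =
      2 * ∑' n : ℕ, (1 : ℝ) / ((n : ℝ) + 1) ^ 3 := by
  have key : ∑' t : ℕ, (harmonic (t+1) : ℝ) / ((t:ℝ)+1)^2
      = 2 * (∑' t : ℕ, (harmonic (t+2) : ℝ) / ((t:ℝ)+2)^2 - ∑' t : ℕ, (1:ℝ)/((t:ℝ)+2)^3) := by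
    rw [← eqK, ← tsumK, ← tsumG_eq_tsumK, ← tsumF_eq_two_tsumG, tsumF_eq_S]
  have h1 := eqS
  have h2 := eqZ
  linarith
end

section
/- Let C be a lower-triangular Toeplitz n×n matrix with first-column entries c_0 ≥ c_1 ≥ ⋯ ≥ c_{n-1} ≥ 0, i.e., C_{i,j} = c_{i-j} for j ≤ i and 0 otherwise. For integers b ≥ 1 and k = ⌈n/b⌉, over all index sets π ⊆ {1,…,n} of size at most k with pairwise distances at least b, the maximum of ‖∑_{s∈π} C_{:,s}‖₂ is attained at π = {1, 1+b, 1+2b, …}; i.e., the b-min-separation sensitivity equals ‖∑_{j=0}^{k-1} C_{:,1+jb}‖₂. -/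
/-- The `b`-min-separation sensitivity of a lower-triangular Toeplitz matrix with
decreasing nonnegative diagonal entries is attained at the set of positions
`{0, b, 2b, …}` (0-based), i.e. the multiples of `b`. -/
theorem stmt_17 (n b : ℕ) (hn : 1 ≤ n) (hb : 1 ≤ b) (c : ℕ → ℝ)
    (hmono : ∀ i j : ℕ, i ≤ j → j < n → c j ≤ c i)
    (hnonneg : ∀ i : ℕ, i < n → 0 ≤ c i)
    (C : Matrix (Fin n) (Fin n) ℝ)
    (hC : ∀ i j : Fin n, C i j = if (j : ℕ) ≤ (i : ℕ) then c ((i : ℕ) - (j : ℕ)) else 0) :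
    IsGreatest
      {x : ℝ | ∃ π : Finset (Fin n),
          π.card ≤ (n + b - 1) / b ∧
          (∀ i ∈ π, ∀ j ∈ π, i ≠ j → (b : ℤ) ≤ |(i : ℤ) - (j : ℤ)|) ∧
          x = Real.sqrt (∑ r : Fin n, (∑ s ∈ π, C r s) ^ 2)}
      (Real.sqrt (∑ r : Fin n,
        (∑ s ∈ Finset.univ.filter (fun s : Fin n => (s : ℕ) % b = 0), C r s) ^ 2)) := by
  set T : Finset (Fin n) := Finset.univ.filter (fun s : Fin n => (s : ℕ) % b = 0) with hT
  -- entries are nonnegative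
  have hCnn : ∀ r s : Fin n, 0 ≤ C r s := by
    intro r s
    rw [hC]
    split
    · exact hnonneg _ (lt_of_le_of_lt (Nat.sub_le _ _) r.isLt)
    · exact le_refl 0
  have hGnn : ∀ s t : Fin n, 0 ≤ ∑ r : Fin n, C r s * C r t := fun s t =>
    Finset.sum_nonneg fun r _ => mul_nonneg (hCnn r s) (hCnn r t)
  -- inner products of columns as a range sum
  have hinner : ∀ s t : Fin n, (s : ℕ) ≤ t →
      ∑ r : Fin n, C r s * C r t
        = ∑ u ∈ Finset.range (n - (t : ℕ)), c (u + ((t : ℕ) - s)) * c u := by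
    intro s t hst
    have h1 : ∀ r : Fin n, C r s * C r t =
        (fun r : ℕ => if (t : ℕ) ≤ r then c (r - s) * c (r - t) else 0) (r : ℕ) := by
      intro r
      rw [hC, hC]
      by_cases h : (t : ℕ) ≤ (r : ℕ)
      · simp [h, le_trans hst h]
      · simp [h]
    calc ∑ r : Fin n, C r s * C r t
        = ∑ r ∈ Finset.range n,
            (if (t : ℕ) ≤ r then c (r - (s : ℕ)) * c (r - (t : ℕ)) else 0) := by
          simp_rw [h1]
          exact Fin.sum_univ_eq_sum_range (fun r => if (t : ℕ) ≤ r then c (r - (s : ℕ)) * c (r - (t : ℕ)) else 0) n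
      _ = ∑ r ∈ Finset.Ico (t : ℕ) n, c (r - (s : ℕ)) * c (r - (t : ℕ)) := by
          rw [← Finset.sum_filter]
          apply Finset.sum_congr _ (fun x _ => rfl)
          ext r
          simp only [Finset.mem_filter, Finset.mem_range, Finset.mem_Ico]
          omega
      _ = ∑ u ∈ Finset.range (n - (t : ℕ)),
            c ((t : ℕ) + u - (s : ℕ)) * c ((t : ℕ) + u - (t : ℕ)) :=
          Finset.sum_Ico_eq_sum_range _ _ _
      _ = ∑ u ∈ Finset.range (n - (t : ℕ)), c (u + ((t : ℕ) - s)) * c u := by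
          apply Finset.sum_congr rfl
          intro u _
          have e1 : (t : ℕ) + u - (s : ℕ) = u + ((t : ℕ) - s) := by omega
          have e2 : (t : ℕ) + u - (t : ℕ) = u := by omega
          rw [e1, e2]
  -- monotonicity of inner products
  have hGmono : ∀ s t s' t' : Fin n, (s : ℕ) ≤ t → (s' : ℕ) ≤ t' → (t' : ℕ) ≤ t →
      (t' : ℕ) - s' ≤ (t : ℕ) - s →
      ∑ r : Fin n, C r s * C r t ≤ ∑ r : Fin n, C r s' * C r t' := by
    intro s t s' t' h1 h2 h3 h4
    rw [hinner s t h1, hinner s' t' h2]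
    have htn := t.isLt
    have ht'n := t'.isLt
    have hsn := s.isLt
    have hs'n := s'.isLt
    have hsub : Finset.range (n - (t : ℕ)) ⊆ Finset.range (n - (t' : ℕ)) :=
      Finset.range_subset_range.2 (by omega)
    refine le_trans (Finset.sum_le_sum ?_) (Finset.sum_le_sum_of_subset_of_nonneg hsub ?_)
    · intro u hu
      simp only [Finset.mem_range] at hu
      apply mul_le_mul_of_nonneg_right
      · exact hmono _ _ (by omega) (by omega)
      · exact hnonneg u (by omega)
    · intro u hu _
      simp only [Finset.mem_range] at hu
      exact mul_nonneg (hnonneg _ (by omega)) (hnonneg u (by omega))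
  -- expansion of the squared norm
  have hexp : ∀ p : Finset (Fin n), ∑ r : Fin n, (∑ s ∈ p, C r s) ^ 2
      = ∑ s ∈ p, ∑ t ∈ p, ∑ r : Fin n, C r s * C r t := by
    intro p
    simp_rw [sq, Finset.sum_mul_sum]
    rw [Finset.sum_comm]
    exact Finset.sum_congr rfl fun s _ => Finset.sum_comm
  constructor
  · -- membership : T itself is admissible
    refine ⟨T, ?_, ?_, rfl⟩
    · have : T.card ≤ (Finset.range ((n + b - 1) / b)).card := by
        apply Finset.card_le_card_of_injOn (fun s : Fin n => (s : ℕ) / b)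
        · intro s _
          simp only [Finset.mem_range]
          have hsn := s.isLt
          have hd : ((s : ℕ) / b) * b ≤ (s : ℕ) := Nat.div_mul_le_self _ _
          have h2 : ((s : ℕ) / b + 1) * b ≤ n + b - 1 := by
            have : ((s : ℕ) / b + 1) * b = ((s : ℕ) / b) * b + b := by ring
            rw [this]; omega
          have := (Nat.le_div_iff_mul_le hb).2 h2
          simpa using Nat.lt_of_lt_of_le (Nat.lt_succ_self _) this
        · intro s hs t ht hst
          simp only [hT, Finset.coe_filter, Finset.mem_univ, true_and,
            Set.mem_setOf_eq] at hs ht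
          simp only at hst
          have h1 : ((s : ℕ) / b) * b = (s : ℕ) := Nat.div_mul_cancel (Nat.dvd_of_mod_eq_zero hs)
          have h2 : ((t : ℕ) / b) * b = (t : ℕ) := Nat.div_mul_cancel (Nat.dvd_of_mod_eq_zero ht)
          apply Fin.ext
          rw [← h1, ← h2, hst]
      simpa using this
    · intro i hi j hj hij
      simp only [hT, Finset.mem_filter, Finset.mem_univ, true_and] at hi hj
      have hdi : b ∣ (i : ℕ) := Nat.dvd_of_mod_eq_zero hi
      have hdj : b ∣ (j : ℕ) := Nat.dvd_of_mod_eq_zero hj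
      have hne : (i : ℕ) ≠ (j : ℕ) := fun h => hij (Fin.ext h)
      rcases Nat.lt_or_ge (i : ℕ) (j : ℕ) with h | h
      · have hle : b ≤ (j : ℕ) - i := Nat.le_of_dvd (by omega) (Nat.dvd_sub hdj hdi)
        have h2 : (b : ℤ) ≤ (j : ℤ) - i := by omega
        calc (b : ℤ) ≤ (j : ℤ) - i := h2
          _ ≤ |(i : ℤ) - j| := by rw [abs_sub_comm]; exact le_abs_self _
      · have hlt : (j : ℕ) < i := by omega
        have hle : b ≤ (i : ℕ) - j := Nat.le_of_dvd (by omega) (Nat.dvd_sub hdi hdj)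
        have h2 : (b : ℤ) ≤ (i : ℤ) - j := by omega
        exact le_trans h2 (le_abs_self _)
  · -- upper bound
    rintro x ⟨p, hpcard, hpsep, rfl⟩
    apply Real.sqrt_le_sqrt
    rw [hexp, hexp]
    set m := p.card with hm
    set e := p.orderEmbOfFin rfl with he
    have hsep1 : ∀ i j : Fin m, i < j → (e i : ℕ) + b ≤ e j := by
      intro i j hij
      have hne : (e i : Fin n) ≠ e j := fun h => absurd (e.injective h) (ne_of_lt hij)
      have h1 := hpsep (e i) (p.orderEmbOfFin_mem rfl i) (e j) (p.orderEmbOfFin_mem rfl j) hne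
      have h2 : ((e i : Fin n) : ℕ) < ((e j : Fin n) : ℕ) := e.strictMono hij
      have h3 : |((e i : Fin n) : ℤ) - ((e j : Fin n) : ℤ)|
          = ((e j : Fin n) : ℤ) - ((e i : Fin n) : ℤ) := by
        rw [abs_sub_comm]; exact abs_of_nonneg (by omega)
      rw [h3] at h1
      omega
    have hstep : ∀ d : ℕ, ∀ i j : Fin m, (j : ℕ) = (i : ℕ) + d →
        (e i : ℕ) + d * b ≤ e j := by
      intro d
      induction d with
      | zero =>
        intro i j hj
        have : i = j := Fin.ext (by omega)
        subst this; simp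
      | succ d ih =>
        intro i j hj
        have hjm := j.isLt
        have hij : (i : ℕ) + d < m := by omega
        have h1 := ih i ⟨(i : ℕ) + d, hij⟩ rfl
        have h2 : (⟨(i : ℕ) + d, hij⟩ : Fin m) < j := by
          rw [Fin.lt_def]; simp; omega
        have h3 := hsep1 ⟨(i : ℕ) + d, hij⟩ j h2
        have h4 : (d + 1) * b = d * b + b := by ring
        rw [h4]
        linarith
    have hlow : ∀ i : Fin m, (i : ℕ) * b ≤ e i := by
      intro i
      have h0 : (0 : ℕ) < m := lt_of_le_of_lt (Nat.zero_le _) i.isLt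
      have h1 := hstep (i : ℕ) ⟨0, h0⟩ i (by simp)
      exact le_trans (Nat.le_add_left _ _) h1
    have hμlt : ∀ i : Fin m, (i : ℕ) * b < n := fun i =>
      Nat.lt_of_le_of_lt (hlow i) (e i).isLt
    set μ : Fin m → Fin n := fun i => ⟨(i : ℕ) * b, hμlt i⟩ with hμ
    have key : ∀ i j : Fin m, (i : ℕ) ≤ j →
        ∑ r : Fin n, C r (e i) * C r (e j) ≤ ∑ r : Fin n, C r (μ i) * C r (μ j) := by
      intro i j hij
      apply hGmono
      · exact e.monotone (by exact hij)
      · exact Nat.mul_le_mul_right b hij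
      · exact hlow j
      · have h1 := hstep ((j : ℕ) - i) i j (by omega)
        have h2 : ((j : ℕ) - i) * b = (j : ℕ) * b - (i : ℕ) * b := Nat.sub_mul _ _ _
        rw [h2] at h1
        have h3 : (i : ℕ) * b ≤ (j : ℕ) * b := Nat.mul_le_mul_right b hij
        have h4 : (e i : ℕ) ≤ e j := e.monotone (by exact hij)
        simp only [hμ]
        generalize hA : (i : ℕ) * b = A at *
        generalize hB : (j : ℕ) * b = B at *
        omega
    have hpair : ∀ i j : Fin m,
        ∑ r : Fin n, C r (e i) * C r (e j) ≤ ∑ r : Fin n, C r (μ i) * C r (μ j) := by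
      intro i j
      rcases le_total (i : ℕ) (j : ℕ) with h | h
      · exact key i j h
      · have h1 := key j i h
        calc ∑ r : Fin n, C r (e i) * C r (e j)
            = ∑ r : Fin n, C r (e j) * C r (e i) := by simp_rw [mul_comm]
          _ ≤ ∑ r : Fin n, C r (μ j) * C r (μ i) := h1
          _ = ∑ r : Fin n, C r (μ i) * C r (μ j) := by simp_rw [mul_comm]
    have hinj : ∀ x ∈ Finset.univ, ∀ y ∈ Finset.univ,
        (fun i : Fin m => (e i : Fin n)) x = (fun i => e i) y → x = y :=
      fun x _ y _ h => e.injective h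
    have himg : p = Finset.image (fun i : Fin m => (e i : Fin n)) Finset.univ := by
      apply Finset.coe_injective
      rw [Finset.coe_image, Finset.coe_univ, Set.image_univ]
      exact (p.range_orderEmbOfFin rfl).symm
    have hμinj : ∀ x ∈ Finset.univ, ∀ y ∈ Finset.univ, μ x = μ y → x = y := by
      intro x _ y _ h
      apply Fin.ext
      have := congrArg (fun z : Fin n => (z : ℕ)) h
      simp only [hμ] at this
      exact Nat.eq_of_mul_eq_mul_right hb this
    have hAsub : Finset.image μ Finset.univ ⊆ T := by
      intro s hs
      simp only [Finset.mem_image] at hs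
      obtain ⟨i, _, rfl⟩ := hs
      simp only [hT, Finset.mem_filter, Finset.mem_univ, true_and, hμ]
      exact Nat.mul_mod_left _ _
    calc ∑ s ∈ p, ∑ t ∈ p, ∑ r : Fin n, C r s * C r t
        = ∑ i : Fin m, ∑ j : Fin m, ∑ r : Fin n, C r (e i) * C r (e j) := by
          conv_lhs => rw [himg]
          rw [Finset.sum_image hinj]
          exact Finset.sum_congr rfl fun i _ => Finset.sum_image hinj
      _ ≤ ∑ i : Fin m, ∑ j : Fin m, ∑ r : Fin n, C r (μ i) * C r (μ j) :=
          Finset.sum_le_sum fun i _ => Finset.sum_le_sum fun j _ => hpair i j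
      _ = ∑ s ∈ Finset.image μ Finset.univ, ∑ t ∈ Finset.image μ Finset.univ,
            ∑ r : Fin n, C r s * C r t := by
          rw [Finset.sum_image hμinj]
          exact Finset.sum_congr rfl fun i _ =>
            (Finset.sum_image (f := fun t => ∑ r : Fin n, C r (μ i) * C r t) hμinj).symm
      _ ≤ ∑ s ∈ Finset.image μ Finset.univ, ∑ t ∈ T, ∑ r : Fin n, C r s * C r t :=
          Finset.sum_le_sum fun s _ =>
            Finset.sum_le_sum_of_subset_of_nonneg hAsub fun t _ _ => hGnn s t
      _ ≤ ∑ s ∈ T, ∑ t ∈ T, ∑ r : Fin n, C r s * C r t :=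
          Finset.sum_le_sum_of_subset_of_nonneg hAsub fun s _ _ =>
            Finset.sum_nonneg fun t _ => hGnn s t
end

section
/- Let A be the n×n running-mean matrix with A_{i,j} = 1/i for j ≤ i and 0 otherwise, and let π₁ = {1, 1+b, 1+2b, …, 1+(k−1)b} with k = ⌈n/b⌉ and n ≥ b ≥ 1. Then ‖A·1_{π₁}‖₂² = ∑_{j=1}^{n} (⌈j/b⌉/j)² ≥ 1 + (n−b)/b², where 1_{π₁} is the indicator vector of π₁. -/
open Finset

lemma count_mult (b : ℕ) (hb : 1 ≤ b) (m : ℕ) :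
    ((Finset.range m).filter (· % b = 0)).card = (m + b - 1) / b := by
  induction m with
  | zero => simp; exact (Nat.div_eq_of_lt (by omega)).symm
  | succ m ih =>
      rw [Finset.range_add_one, Finset.filter_insert]
      have hmb : m + 1 + b - 1 = (m + b - 1) + 1 := by omega
      rw [hmb, Nat.succ_div]
      have h1 : m + b - 1 + 1 = m + b := by omega
      have h2 : (b ∣ m + b) ↔ m % b = 0 := by
        rw [Nat.dvd_add_self_right, Nat.dvd_iff_mod_eq_zero]
      by_cases h : m % b = 0
      · rw [if_pos h, Finset.card_insert_of_notMem (by simp), ih]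
        rw [if_pos (by rw [h1]; exact h2.mpr h)]
      · rw [if_neg h, ih, if_neg (by rw [h1]; exact fun hc => h (h2.mp hc))]
        simp

/-- For the running-mean matrix `A` (0-based: `A i j = 1/(i+1)` for `j ≤ i`) and the
indicator vector of the positions `{0, b, 2b, …}` (the 1-based positions `1 + jb`),
the squared norm of `A · 1_{π₁}` equals `∑_{j=1}^n (⌈j/b⌉/j)²` and is at least
`1 + (n - b)/b²`. -/
theorem stmt_18 (n b : ℕ) (hb : 1 ≤ b) (hbn : b ≤ n)
    (A : Matrix (Fin n) (Fin n) ℝ)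
    (hA : ∀ i j : Fin n, A i j = if (j : ℕ) ≤ (i : ℕ) then 1 / ((i : ℝ) + 1) else 0)
    (v : Fin n → ℝ) (hv : ∀ j : Fin n, v j = if (j : ℕ) % b = 0 then 1 else 0) :
    (∑ i : Fin n, (∑ j : Fin n, A i j * v j) ^ 2 =
        ∑ j ∈ Finset.Icc 1 n, ((((j + b - 1) / b : ℕ) : ℝ) / (j : ℝ)) ^ 2) ∧
      1 + ((n : ℝ) - b) / (b : ℝ) ^ 2 ≤
        ∑ j ∈ Finset.Icc 1 n, ((((j + b - 1) / b : ℕ) : ℝ) / (j : ℝ)) ^ 2 := by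
  have hb0 : (0:ℝ) < b := by exact_mod_cast hb
  have key : ∀ i : Fin n, (∑ j : Fin n, A i j * v j)
      = ((((i : ℕ) + 1 + b - 1) / b : ℕ) : ℝ) / (((i : ℕ) : ℝ) + 1) := by
    intro i
    have : ∀ j : Fin n, A i j * v j
        = if (j : ℕ) ≤ (i : ℕ) ∧ (j : ℕ) % b = 0 then 1 / ((i : ℝ) + 1) else 0 := by
      intro j
      rw [hA, hv]
      by_cases h1 : (j : ℕ) ≤ (i : ℕ) <;> by_cases h2 : (j : ℕ) % b = 0 <;>
        simp [h1, h2]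
    rw [Finset.sum_congr rfl fun j _ => this j]
    rw [Fin.sum_univ_eq_sum_range
      (fun j => if j ≤ (i : ℕ) ∧ j % b = 0 then 1 / ((i : ℝ) + 1) else 0)]
    rw [← Finset.sum_filter]
    have hfil : (Finset.range n).filter (fun j => j ≤ (i : ℕ) ∧ j % b = 0)
        = (Finset.range ((i : ℕ) + 1)).filter (· % b = 0) := by
      ext j
      simp only [Finset.mem_filter, Finset.mem_range]
      constructor
      · rintro ⟨_, h1, h2⟩; exact ⟨by omega, h2⟩
      · rintro ⟨h1, h2⟩; exact ⟨by omega, by omega, h2⟩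
    rw [hfil, Finset.sum_const, count_mult b hb]
    have : (i : ℕ) + 1 + b - 1 = (i : ℕ) + b := by omega
    rw [this]
    push_cast
    ring
  -- Part 1 finished modulo reindexing
  have part1 : (∑ i : Fin n, (∑ j : Fin n, A i j * v j) ^ 2 =
      ∑ j ∈ Finset.Icc 1 n, ((((j + b - 1) / b : ℕ) : ℝ) / (j : ℝ)) ^ 2) := by
    rw [Finset.sum_congr rfl fun i _ => by rw [key i]]
    rw [Fin.sum_univ_eq_sum_range
      (fun i => ((((i + 1 + b - 1) / b : ℕ) : ℝ) / ((i : ℝ) + 1)) ^ 2)]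
    rw [← Finset.Ico_add_one_right_eq_Icc, Finset.sum_Ico_eq_sum_range]
    apply Finset.sum_congr (by norm_num)
    intro i _
    have : 1 + i + b - 1 = i + 1 + b - 1 := by omega
    rw [this]
    push_cast
    ring_nf
  refine ⟨part1, ?_⟩
  -- Part 2
  have hterm : ∀ j ∈ Finset.Icc 2 n, (1:ℝ) / (b:ℝ) ^ 2
      ≤ ((((j + b - 1) / b : ℕ) : ℝ) / (j : ℝ)) ^ 2 := by
    intro j hj
    simp only [Finset.mem_Icc] at hj
    have hj1 : 1 ≤ j := by omega
    have hq : j ≤ b * ((j + b - 1) / b) := by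
      have h1 := Nat.div_add_mod (j + b - 1) b
      have h2 := Nat.mod_lt (j + b - 1) (show 0 < b by omega)
      omega
    have hqR : (j : ℝ) / (b : ℝ) ≤ (((j + b - 1) / b : ℕ) : ℝ) := by
      rw [div_le_iff₀ hb0]
      calc (j:ℝ) ≤ (b * ((j + b - 1) / b) : ℕ) := by exact_mod_cast hq
        _ = _ := by push_cast; ring
    have hjR : (0:ℝ) < j := by exact_mod_cast hj1
    have : (1:ℝ) / b ≤ (((j + b - 1) / b : ℕ) : ℝ) / j := by
      rw [div_le_div_iff₀ hb0 hjR]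
      have := (div_le_iff₀ hb0).mp hqR
      nlinarith
    calc (1:ℝ) / (b:ℝ)^2 = ((1:ℝ)/b)^2 := by ring
      _ ≤ _ := by
        apply pow_le_pow_left₀ (by positivity) this
  have hn1 : 1 ≤ n := le_trans hb hbn
  have hsplit : Finset.Icc 1 n = insert 1 (Finset.Icc 2 n) := by
    ext j; simp only [Finset.mem_insert, Finset.mem_Icc]; omega
  rw [hsplit, Finset.sum_insert (by simp)]
  have h1term : ((((1 + b - 1) / b : ℕ) : ℝ) / (1 : ℝ)) ^ 2 = 1 := by
    have : (1 + b - 1) / b = 1 := by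
      have : 1 + b - 1 = b := by omega
      rw [this, Nat.div_self (by omega)]
    rw [this]; norm_num
  rw [Nat.cast_one, h1term]
  have hsum : (((n:ℝ) - 1)) / (b:ℝ)^2
      ≤ ∑ j ∈ Finset.Icc 2 n, ((((j + b - 1) / b : ℕ) : ℝ) / (j : ℝ)) ^ 2 := by
    calc ((n:ℝ) - 1) / (b:ℝ)^2 = (Finset.Icc 2 n).card * ((1:ℝ)/(b:ℝ)^2) := by
          rw [Nat.card_Icc]
          have : ((n + 1 - 2 : ℕ) : ℝ) = (n:ℝ) - 1 := by
            rw [Nat.cast_sub (by omega : 2 ≤ n + 1)]; push_cast; ring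
          rw [this]; ring
      _ = ∑ _j ∈ Finset.Icc 2 n, (1:ℝ)/(b:ℝ)^2 := by rw [Finset.sum_const]; ring
      _ ≤ _ := Finset.sum_le_sum hterm
  have hbR : (1:ℝ) ≤ (b:ℝ) := by exact_mod_cast hb
  have hle : ((n:ℝ) - b) / (b:ℝ)^2 ≤ ((n:ℝ) - 1) / (b:ℝ)^2 := by
    gcongr
  linarith
end
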